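/- arXiv:2402.13506 — 2 statements merged into one kernel-verified Lean document; each statement's English description precedes it below -/
import Mathlib

section
/- The taint transfer function defined by the inference rules of Figure 5 over-approximates the concrete semantics on scalar assignments: if p is the assignment x := e, states s₁ and s₂ agree on all variables not in T (i.e., s₁(y) = s₂(y) for every y ∉ T), and x ∉ T' where p ⊢ T ↪ T', then the resulting states after executing p agree on x, i.e., s₁(e) = s₂(e). -/
inductive Expr (Var Val : Type) where
  | const : Val → Expr Var Val
  | var : Var → Expr Var Val
  | op : (Val → Val → Val) → Expr Var Val → Expr Var Val → Expr Var Val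

def Expr.eval {Var Val : Type} (s : Var → Val) : Expr Var Val → Val
  | .const n => n
  | .var x => s x
  | .op f e₁ e₂ => f (e₁.eval s) (e₂.eval s)

def Expr.vars {Var Val : Type} : Expr Var Val → Set Var
  | .const _ => ∅
  | .var x => {x}
  | .op _ e₁ e₂ => e₁.vars ∪ e₂.vars

open Classical in
noncomputable def assignTransfer {Var Val : Type} (x : Var) (e : Expr Var Val)
    (T : Set Var) : Set Var :=
  if (e.vars ∩ T).Nonempty then T ∪ {x} else T \ {x}

lemma eval_agree {Var Val : Type} (s₁ s₂ : Var → Val) :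
    ∀ e : Expr Var Val, (∀ y ∈ e.vars, s₁ y = s₂ y) → e.eval s₁ = e.eval s₂
  | .const n, _ => rfl
  | .var y, h => h y rfl
  | .op f e₁ e₂, h => by
      simp only [Expr.eval]
      rw [eval_agree s₁ s₂ e₁ fun y hy => h y (Or.inl hy),
          eval_agree s₁ s₂ e₂ fun y hy => h y (Or.inr hy)]

/-- the taint transfer function over-approximates the concrete
semantics on scalar assignments `x := e`. -/
theorem taint_overapprox_assign {Var Val : Type} (x : Var) (e : Expr Var Val)
    (T : Set Var) (s₁ s₂ : Var → Val)
    (hagree : ∀ y : Var, y ∉ T → s₁ y = s₂ y)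
    (T' : Set Var) (hT' : T' = assignTransfer x e T)
    (hx : x ∉ T') :
    e.eval s₁ = e.eval s₂ := by
  subst hT'
  unfold assignTransfer at hx
  by_cases h : (e.vars ∩ T).Nonempty
  · simp [h] at hx
  · apply eval_agree
    intro y hy
    apply hagree
    intro hyT
    exact h ⟨y, hy, hyT⟩
end

section
/- Combined with the previous fact: if b : Var → Bool is a taint valuation such that two states s₁, s₂ agree on every variable x with b(x) = false, and the Boolean abstraction ξ(e) evaluates to false under b (ξ defined by ξ(n)=false, ξ(x)=b(x), ξ(e₁⊙e₂)=ξ(e₁)∨ξ(e₂)), then s₁(e) = s₂(e). -/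
def Expr.xi {Var Val : Type} (b : Var → Bool) : Expr Var Val → Bool
  | .const _ => false
  | .var x => b x
  | .op _ e₁ e₂ => e₁.xi b || e₂.xi b

/-- if two states agree on all untainted variables and ξ(e)
evaluates to false under `b`, then the evaluations of `e` agree. -/
theorem xi_false_eval_eq {Var Val : Type} (b : Var → Bool)
    (s₁ s₂ : Var → Val) (hagree : ∀ x : Var, b x = false → s₁ x = s₂ x)
    (e : Expr Var Val) (hxi : e.xi b = false) :
    e.eval s₁ = e.eval s₂ := by
  induction e with
  | const n => rfl
  | var x => exact hagree x hxi
  | op f e₁ e₂ ih₁ ih₂ =>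
    simp [Expr.xi, Bool.or_eq_false_iff] at hxi
    simp [Expr.eval, ih₁ hxi.1, ih₂ hxi.2]
end
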